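/- Let a, b, c, d ∈ ℂ and let Rx = (1/√2)·[[1, −i], [−i, 1]], Ry = (1/√2)·[[1, −1], [1, 1]], Rz = (1/√2)·[[1−i, 0], [0, 1+i]]. Then there exist nonzero scalars κ₁, κ₂, κ₃ ∈ ℂ such that (Rx ⊗ Rx ⊗ Rx ⊗ Rx)·G_{abcd} = κ₁·G_{(−b)(−a)cd}, (Ry ⊗ Ry ⊗ Ry ⊗ Ry)·G_{abcd} = κ₂·G_{adcb}, and (Rz ⊗ Rz ⊗ Rz ⊗ Rz)·G_{abcd} = κ₃·G_{(−d)bc(−a)}. (The fourfold π/2 rotations about X, Y, Z transform the coefficient tuple (a,b,c,d) into (−b,−a,c,d), (a,d,c,b) and (−d,b,c,−a) respectively.) -/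
import Mathlib


open Complex

/-- The index set of four-qubit basis states. -/
abbrev QIdx4 := Fin 2 × Fin 2 × Fin 2 × Fin 2

/-- The four-qubit state `G_{abcd}`. -/
noncomputable def Gstate (a b c d : ℂ) : QIdx4 → ℂ := fun x =>
  if x = (0, 0, 0, 0) ∨ x = (1, 1, 1, 1) then (a + d) / 2
  else if x = (0, 0, 1, 1) ∨ x = (1, 1, 0, 0) then (a - d) / 2
  else if x = (0, 1, 0, 1) ∨ x = (1, 0, 1, 0) then (b + c) / 2
  else if x = (0, 1, 1, 0) ∨ x = (1, 0, 0, 1) then (b - c) / 2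
  else 0

/-- The action of the local operator `O₁ ⊗ O₂ ⊗ O₃ ⊗ O₄` on four-qubit vectors
(multiplication by the Kronecker product matrix). -/
noncomputable def act4 (O₁ O₂ O₃ O₄ : Matrix (Fin 2) (Fin 2) ℂ) (v : QIdx4 → ℂ) :
    QIdx4 → ℂ := fun x =>
  ∑ y : QIdx4, O₁ x.1 y.1 * O₂ x.2.1 y.2.1 * O₃ x.2.2.1 y.2.2.1 * O₄ x.2.2.2 y.2.2.2 * v y

/-- The spin-1/2 rotation matrix by angle π/2 about the X axis. -/
noncomputable def Rx : Matrix (Fin 2) (Fin 2) ℂ :=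
  ((Real.sqrt 2 : ℂ))⁻¹ • !![1, -I; -I, 1]

/-- The spin-1/2 rotation matrix by angle π/2 about the Y axis. -/
noncomputable def Ry : Matrix (Fin 2) (Fin 2) ℂ :=
  ((Real.sqrt 2 : ℂ))⁻¹ • !![1, -1; 1, 1]

/-- The spin-1/2 rotation matrix by angle π/2 about the Z axis. -/
noncomputable def Rz : Matrix (Fin 2) (Fin 2) ℂ :=
  ((Real.sqrt 2 : ℂ))⁻¹ • !![1 - I, 0; 0, 1 + I]

lemma act4_smul (t : ℂ) (A B C D : Matrix (Fin 2) (Fin 2) ℂ) (v : QIdx4 → ℂ) :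
    act4 (t • A) (t • B) (t • C) (t • D) v = (t ^ 4) • act4 A B C D v := by
  funext x
  simp only [act4, Pi.smul_apply, Matrix.smul_apply, smul_eq_mul, Finset.mul_sum]
  apply Finset.sum_congr rfl
  intro y _
  ring

lemma sqrt2_pow : (((Real.sqrt 2 : ℝ) : ℂ))⁻¹ ^ 4 = 1 / 4 := by
  rw [inv_pow]
  have h : ((Real.sqrt 2 : ℝ) : ℂ) ^ 4 = 4 := by
    have h2 : Real.sqrt 2 ^ 4 = 4 := by
      have := Real.sq_sqrt (by norm_num : (0:ℝ) ≤ 2)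
      nlinarith [this]
    calc ((Real.sqrt 2 : ℝ) : ℂ) ^ 4 = ((Real.sqrt 2 ^ 4 : ℝ) : ℂ) := by push_cast; ring
      _ = 4 := by rw [h2]; norm_num
  rw [h]; norm_num

lemma I_pow_3 : (I : ℂ) ^ 3 = -I := by
  rw [pow_succ, Complex.I_sq]; ring

lemma I_pow_4 : (I : ℂ) ^ 4 = 1 := by
  rw [show (4:ℕ) = 2*2 from rfl, pow_mul, Complex.I_sq]; ring

set_option maxHeartbeats 4000000 in
/-- The fourfold π/2 rotations about X, Y, Z transform the coefficient tuple `(a,b,c,d)`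
of `G_{abcd}` into `(-b,-a,c,d)`, `(a,d,c,b)` and `(-d,b,c,-a)` respectively, up to
nonzero scalars. -/
theorem rotations_on_Gabcd (a b c d : ℂ) :
    ∃ κ₁ κ₂ κ₃ : ℂ, κ₁ ≠ 0 ∧ κ₂ ≠ 0 ∧ κ₃ ≠ 0 ∧
      act4 Rx Rx Rx Rx (Gstate a b c d) = κ₁ • Gstate (-b) (-a) c d ∧
      act4 Ry Ry Ry Ry (Gstate a b c d) = κ₂ • Gstate a d c b ∧
      act4 Rz Rz Rz Rz (Gstate a b c d) = κ₃ • Gstate (-d) b c (-a) := by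
  refine ⟨1, 1, 1, one_ne_zero, one_ne_zero, one_ne_zero, ?_, ?_, ?_⟩
  · rw [show Rx = (((Real.sqrt 2 : ℝ) : ℂ))⁻¹ • !![1, -I; -I, 1] from rfl,
      act4_smul, sqrt2_pow]
    funext ⟨i, j, k, l⟩
    fin_cases i <;> fin_cases j <;> fin_cases k <;> fin_cases l <;>
    · simp only [act4, Gstate, Fintype.sum_prod_type, Fin.sum_univ_two,
        Matrix.cons_val_zero, Matrix.cons_val_one, Matrix.head_cons,
        Pi.smul_apply, smul_eq_mul, Prod.mk.injEq, one_smul]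
      norm_num [Fin.ext_iff]
      try ring_nf
      try simp only [I_pow_3, I_pow_4, Complex.I_sq]
      try ring
      try (ring_nf; simp only [I_pow_3, I_pow_4, Complex.I_sq]; ring)
  · rw [show Ry = (((Real.sqrt 2 : ℝ) : ℂ))⁻¹ • !![1, -1; 1, 1] from rfl,
      act4_smul, sqrt2_pow]
    funext ⟨i, j, k, l⟩
    fin_cases i <;> fin_cases j <;> fin_cases k <;> fin_cases l <;>
    · simp only [act4, Gstate, Fintype.sum_prod_type, Fin.sum_univ_two,
        Matrix.cons_val_zero, Matrix.cons_val_one, Matrix.head_cons,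
        Pi.smul_apply, smul_eq_mul, Prod.mk.injEq, one_smul]
      norm_num [Fin.ext_iff]
      try ring_nf
      try simp only [I_pow_3, I_pow_4, Complex.I_sq]
      try ring
      try (ring_nf; simp only [I_pow_3, I_pow_4, Complex.I_sq]; ring)
  · rw [show Rz = (((Real.sqrt 2 : ℝ) : ℂ))⁻¹ • !![1 - I, 0; 0, 1 + I] from rfl,
      act4_smul, sqrt2_pow]
    funext ⟨i, j, k, l⟩
    fin_cases i <;> fin_cases j <;> fin_cases k <;> fin_cases l <;>
    · simp only [act4, Gstate, Fintype.sum_prod_type, Fin.sum_univ_two,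
        Matrix.cons_val_zero, Matrix.cons_val_one, Matrix.head_cons,
        Pi.smul_apply, smul_eq_mul, Prod.mk.injEq, one_smul]
      norm_num [Fin.ext_iff]
      try ring_nf
      try simp only [I_pow_3, I_pow_4, Complex.I_sq]
      try ring
      try (ring_nf; simp only [I_pow_3, I_pow_4, Complex.I_sq]; ring)
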